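/- arXiv:2009.10274 — 2 statements merged into one kernel-verified Lean document; each statement's English description precedes it below -/
import Mathlib

section
/- For positive definite matrices A, B and t ∈ (0,1], the map X ↦ A ♮_t X is a bijection on the set of positive definite matrices. -/
open scoped Matrix.Norms.L2Operator ComplexOrder

variable {n : Type*} [Fintype n] [DecidableEq n]

/-- Real power of a (Hermitian) matrix via the continuous functional calculus. -/
noncomputable def mpow (A : Matrix n n ℂ) (t : ℝ) : Matrix n n ℂ :=
  cfc (fun x : ℝ => x ^ t) A

/-- Matrix logarithm via the continuous functional calculus. -/
noncomputable def mlog (A : Matrix n n ℂ) : Matrix n n ℂ :=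
  cfc Real.log A

/-- The geometric mean `A # B = A^{1/2} (A^{-1/2} B A^{-1/2})^{1/2} A^{1/2}`. -/
noncomputable def geo (A B : Matrix n n ℂ) : Matrix n n ℂ :=
  mpow A (1/2) * mpow (mpow A (-(1/2)) * B * mpow A (-(1/2))) (1/2) * mpow A (1/2)

/-- The weighted geometric mean `A #ₜ B = A^{1/2} (A^{-1/2} B A^{-1/2})^t A^{1/2}`. -/
noncomputable def wgeo (t : ℝ) (A B : Matrix n n ℂ) : Matrix n n ℂ :=
  mpow A (1/2) * mpow (mpow A (-(1/2)) * B * mpow A (-(1/2))) t * mpow A (1/2)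

/-- The weighted spectral geometric mean `A ♮ₜ B = (A⁻¹ # B)^t A (A⁻¹ # B)^t`. -/
noncomputable def sgeo (t : ℝ) (A B : Matrix n n ℂ) : Matrix n n ℂ :=
  mpow (geo A⁻¹ B) t * A * mpow (geo A⁻¹ B) t

/-- Semi-metric `d(A,B) = 2 ‖log (A⁻¹ # B)‖` (operator norm). -/
noncomputable def dsm (A B : Matrix n n ℂ) : ℝ :=
  2 * ‖mlog (geo A⁻¹ B)‖

/-- Loewner order: `Loewner A B` means `A ≤ B`, i.e. `B - A` is positive semidefinite. -/
def Loewner (A B : Matrix n n ℂ) : Prop := (B - A).PosSemidef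

/-! Writing `M = A⁻¹ # X`, the Riccati equation `M A M = X` has `M` as its unique positive definite
solution, so `X ↦ A⁻¹ # X` is a bijection of the positive definite cone with inverse
`M ↦ M A M`. Since `A ♮ₜ X = Mᵗ A Mᵗ`, the map `X ↦ A ♮ₜ X` is the composite of this bijection,
the bijection `M ↦ Mᵗ` (inverse `N ↦ N^{1/t}`, as `t ≠ 0`) and the inverse bijection. -/

open Matrix
open scoped MatrixOrder

section PosDef

variable {A P : Matrix n n ℂ}

lemma Matrix.PosDef.spectrum_pos (hA : A.PosDef) {x : ℝ} (hx : x ∈ spectrum ℝ A) : 0 < x :=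
  (StarOrderedRing.isStrictlyPositive_iff_spectrum_pos A hA.isHermitian.isSelfAdjoint).mp
    hA.isStrictlyPositive x hx

lemma cfc_posDef (hA : A.PosDef) {f : ℝ → ℝ} (hf : ∀ x ∈ spectrum ℝ A, 0 < f x) :
    (cfc f A).PosDef :=
  isStrictlyPositive_iff_posDef.mp <|
    (cfc_isStrictlyPositive_iff f A (finite_real_spectrum.continuousOn _)
      hA.isHermitian.isSelfAdjoint).mpr hf

lemma Matrix.PosDef.mul_mul_same (hA : A.PosDef) (hP : P.IsHermitian) (hPu : IsUnit P) :
    (P * A * P).PosDef := by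
  simpa only [hP.eq] using
    hA.mul_mul_conjTranspose_same (B := P) (vecMul_injective_of_isUnit hPu)

end PosDef

section mpow

variable {A : Matrix n n ℂ}

lemma mpow_posDef (hA : A.PosDef) (t : ℝ) : (mpow A t).PosDef :=
  cfc_posDef hA fun _ hx => Real.rpow_pos_of_pos (hA.spectrum_pos hx) t

lemma mpow_zero (hA : A.PosDef) : mpow A 0 = 1 := by
  rw [mpow, cfc_congr (g := fun _ => 1) fun x _ => x.rpow_zero]
  exact cfc_one ℝ A hA.isHermitian.isSelfAdjoint

lemma mpow_one (hA : A.PosDef) : mpow A 1 = A := by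
  rw [mpow, cfc_congr (g := id) fun x _ => x.rpow_one]
  exact cfc_id ℝ A hA.isHermitian.isSelfAdjoint

lemma mpow_add (hA : A.PosDef) (s r : ℝ) : mpow A (s + r) = mpow A s * mpow A r := by
  rw [mpow, mpow, mpow, ← cfc_mul _ _ A (finite_real_spectrum.continuousOn _)
    (finite_real_spectrum.continuousOn _)]
  exact cfc_congr fun x hx => Real.rpow_add (hA.spectrum_pos hx) s r

lemma mpow_mpow (hA : A.PosDef) (s r : ℝ) : mpow (mpow A s) r = mpow A (s * r) := by
  rw [mpow, mpow, mpow, ← cfc_comp' (fun x : ℝ => x ^ r) (fun x : ℝ => x ^ s) A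
    ((finite_real_spectrum.image _).continuousOn _) (finite_real_spectrum.continuousOn _)
    hA.isHermitian.isSelfAdjoint]
  exact cfc_congr fun x hx => (Real.rpow_mul (hA.spectrum_pos hx).le s r).symm

lemma mpow_neg_mul_mpow (hA : A.PosDef) (s : ℝ) : mpow A (-s) * mpow A s = 1 := by
  rw [← mpow_add hA, neg_add_cancel, mpow_zero hA]

lemma mpow_mul_mpow_neg (hA : A.PosDef) (s : ℝ) : mpow A s * mpow A (-s) = 1 := by
  rw [← mpow_add hA, add_neg_cancel, mpow_zero hA]

lemma mpow_half_mul_self (hA : A.PosDef) : mpow A (1 / 2) * mpow A (1 / 2) = A := by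
  rw [← mpow_add hA, add_halves, mpow_one hA]

lemma inv_mpow (hA : A.PosDef) (t : ℝ) : mpow A⁻¹ t = mpow A (-t) := by
  have hinv : mpow A (-1) = A⁻¹ := by
    simpa only [mpow_one hA] using (inv_eq_left_inv (mpow_neg_mul_mpow hA 1)).symm
  rw [← hinv, mpow_mpow hA, neg_one_mul]

end mpow

section Riccati

variable {A B M : Matrix n n ℂ}

lemma geo_posDef (hA : A.PosDef) (hB : B.PosDef) : (geo A B).PosDef := by
  have hP := mpow_posDef hA (1 / 2)
  have hQ := mpow_posDef hA (-(1 / 2))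
  exact (mpow_posDef (hB.mul_mul_same hQ.isHermitian hQ.isUnit) _).mul_mul_same
    hP.isHermitian hP.isUnit

lemma geo_inv_mul_mul_geo_inv (hA : A.PosDef) (hB : B.PosDef) :
    geo A⁻¹ B * A * geo A⁻¹ B = B := by
  set P := mpow A (-(1 / 2))
  set Q := mpow A (1 / 2)
  have hQ := mpow_posDef hA (1 / 2)
  have hQQ : Q * Q = A := mpow_half_mul_self hA
  set S := mpow (Q * B * Q) (1 / 2)
  have hSS : S * S = Q * B * Q := mpow_half_mul_self (hB.mul_mul_same hQ.isHermitian hQ.isUnit)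
  have hPQ : P * Q = 1 := mpow_neg_mul_mpow hA _
  have hQP : Q * P = 1 := mpow_mul_mpow_neg hA _
  have hgeo : geo A⁻¹ B = P * S * P := by
    rw [geo, inv_mpow hA, inv_mpow hA, neg_neg]
  calc geo A⁻¹ B * A * geo A⁻¹ B = P * S * (P * Q) * (Q * P) * S * P := by
        rw [hgeo, ← hQQ]; simp only [Matrix.mul_assoc]
    _ = P * (S * S) * P := by rw [hPQ, hQP, mul_one, mul_one, Matrix.mul_assoc P S S]
    _ = (P * Q) * B * (Q * P) := by rw [hSS]; simp only [Matrix.mul_assoc]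
    _ = B := by rw [hPQ, hQP, one_mul, mul_one]

lemma mul_mul_self_injOn (hA : A.PosDef) :
    Set.InjOn (fun M => M * A * M) {X : Matrix n n ℂ | X.PosDef} := by
  intro M hM N hN h
  set Q := mpow A (1 / 2)
  have hQ := mpow_posDef hA (1 / 2)
  have hQQ : Q * Q = A := mpow_half_mul_self hA
  have hQMQ := (hM : M.PosDef).mul_mul_same hQ.isHermitian hQ.isUnit
  have hQNQ := (hN : N.PosDef).mul_mul_same hQ.isHermitian hQ.isUnit
  have hsq (X : Matrix n n ℂ) : (Q * X * Q) ^ 2 = Q * (X * A * X) * Q := by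
    rw [pow_two, ← hQQ]; simp only [Matrix.mul_assoc]
  -- `Q M Q` and `Q N Q` are positive square roots of the same matrix
  have hQ_eq : Q * M * Q = Q * N * Q :=
    (CFC.sq_eq_sq_iff _ _ hQMQ.posSemidef.nonneg hQNQ.posSemidef.nonneg).mp <| by
      rw [hsq, hsq]; exact congrArg (Q * · * Q) h
  exact hQ.isUnit.mul_left_cancel (hQ.isUnit.mul_right_cancel hQ_eq)

lemma geo_inv_mul_mul_self (hA : A.PosDef) (hM : M.PosDef) : geo A⁻¹ (M * A * M) = M := by
  have hX : (M * A * M).PosDef := hA.mul_mul_same hM.isHermitian hM.isUnit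
  exact mul_mul_self_injOn hA (geo_posDef hA.inv hX) hM (geo_inv_mul_mul_geo_inv hA hX)

end Riccati

section Bijections

variable {A : Matrix n n ℂ}

lemma invOn_geo_inv (hA : A.PosDef) :
    Set.InvOn (fun M => M * A * M) (geo A⁻¹) {X : Matrix n n ℂ | X.PosDef}
      {X : Matrix n n ℂ | X.PosDef} :=
  ⟨fun _ hX => geo_inv_mul_mul_geo_inv hA hX, fun _ hM => geo_inv_mul_mul_self hA hM⟩

lemma bijOn_geo_inv (hA : A.PosDef) :
    Set.BijOn (geo A⁻¹) {X : Matrix n n ℂ | X.PosDef} {X : Matrix n n ℂ | X.PosDef} :=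
  (invOn_geo_inv hA).bijOn (fun _ hX => geo_posDef hA.inv hX)
    (fun _ hM => hA.mul_mul_same hM.isHermitian hM.isUnit)

lemma bijOn_mul_mul_self (hA : A.PosDef) :
    Set.BijOn (fun M => M * A * M) {X : Matrix n n ℂ | X.PosDef} {X : Matrix n n ℂ | X.PosDef} :=
  (invOn_geo_inv hA).symm.bijOn (fun _ hM => hA.mul_mul_same hM.isHermitian hM.isUnit)
    (fun _ hX => geo_posDef hA.inv hX)

lemma bijOn_mpow {t : ℝ} (ht : t ≠ 0) :
    Set.BijOn (mpow · t) {X : Matrix n n ℂ | X.PosDef} {X : Matrix n n ℂ | X.PosDef} := by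
  have hinv : Set.InvOn (mpow · t⁻¹) (mpow · t) {X : Matrix n n ℂ | X.PosDef}
      {X : Matrix n n ℂ | X.PosDef} :=
    ⟨fun _ hX => by simp only [mpow_mpow hX, mul_inv_cancel₀ ht, mpow_one hX],
      fun _ hX => by simp only [mpow_mpow hX, inv_mul_cancel₀ ht, mpow_one hX]⟩
  exact hinv.bijOn (fun _ hX => mpow_posDef hX t) (fun _ hX => mpow_posDef hX t⁻¹)

end Bijections

lemma sgeo_eq_comp (t : ℝ) (A : Matrix n n ℂ) :
    sgeo t A = (fun M => M * A * M) ∘ (mpow · t) ∘ geo A⁻¹ :=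
  rfl

theorem stmt8_general (A : Matrix n n ℂ) (hA : A.PosDef)
    {t : ℝ} (ht : t ∈ Set.Ioc (0:ℝ) 1) :
    Set.BijOn (fun X => sgeo t A X) {X : Matrix n n ℂ | X.PosDef}
      {X : Matrix n n ℂ | X.PosDef} := by
  rw [sgeo_eq_comp]
  exact (bijOn_mul_mul_self hA).comp ((bijOn_mpow ht.1.ne').comp (bijOn_geo_inv hA))

/-- for `t ∈ (0,1]` the map `X ↦ A ♮ₜ X` is a bijection on the
set of positive definite matrices. -/
theorem stmt8 (A B : Matrix n n ℂ) (hA : A.PosDef) (hB : B.PosDef)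
    {t : ℝ} (ht : t ∈ Set.Ioc (0:ℝ) 1) :
    Set.BijOn (fun X => sgeo t A X) {X : Matrix n n ℂ | X.PosDef}
      {X : Matrix n n ℂ | X.PosDef} :=
  stmt8_general A hA ht
end

section
/- Let A, B be positive definite matrices and t ∈ (0,1]. If A^{-1} ♮_t B ≤ A^{-1} in the Loewner order, then A^p # B^p ≤ I for every p ≥ 1. -/
open scoped Matrix.Norms.L2Operator ComplexOrder

variable {n : Type*} [Fintype n] [DecidableEq n]

/-!
Write `g = A # B`. Conjugating the hypothesis `gᵗ A⁻¹ gᵗ ≤ A⁻¹` by `A^{1/2}` shows that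
`N = A^{-1/2} gᵗ A^{1/2}` is a contraction; `gᵗ` is similar to `N`, so its spectral radius, which
is its norm, is at most one, and hence `g ≤ 1`. The conclusion is then the Ando–Hiai inequality.

For `p ∈ [1, 2]` put `D = (A^{-1/2} B A^{-1/2})^{1/2}`, so that `A # B ≤ 1` says `D ≤ A⁻¹`, hence
`D A D ≤ D`. Since `B = M M*` with `M = A^{1/2} D`, we have `Bᵖ = M (D A D)^{p-1} M*`, and
Löwner–Heinz gives `A^{-p/2} Bᵖ A^{-p/2} ≤ A^{-(p-1)/2} D^{p+1} A^{-(p-1)/2}`. The square root of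
the right side is at most `A^{-p}` by the case `(T^{r/2} D^{2+r} T^{r/2})^{1/2} ≤ T^{1+r}`
(`D ≤ T`, `r ∈ [0, 1]`) of Furuta's inequality, applied with `T = A⁻¹` and `r = p - 1`. Larger `p`
are reached by repeated doubling.
-/

open scoped NNReal MatrixOrder

namespace CFC

variable {𝔄 : Type*} [CStarAlgebra 𝔄] [PartialOrder 𝔄] [StarOrderedRing 𝔄] {a b : 𝔄}

lemma rpow_mul_rpow_of_add_eq (ha : IsUnit a) {x y z : ℝ} (h : x + y = z) :
    a ^ x * a ^ y = a ^ z := by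
  rw [← h, rpow_add ha]

lemma rpow_mul_rpow_mul_rpow_of_add_eq (ha : IsUnit a) {x y z w : ℝ} (h : x + y + z = w) :
    a ^ x * a ^ y * a ^ z = a ^ w := by
  rw [← h, rpow_add ha, rpow_add ha]

lemma rpow_conjugate_rpow_cancel (ha : IsStrictlyPositive a) {x y : ℝ} (h : x + y = 0) (c : 𝔄) :
    a ^ x * (a ^ y * c * a ^ y) * a ^ x = c := by
  have hxy : a ^ x * a ^ y = 1 := by rw [← rpow_add ha.isUnit, h, rpow_zero a]
  have hyx : a ^ y * a ^ x = 1 := by rw [← rpow_add ha.isUnit, add_comm, h, rpow_zero a]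
  rw [← mul_assoc, ← mul_assoc, hxy, one_mul, mul_assoc, hyx, mul_one]

lemma isSelfAdjoint_rpow (a : 𝔄) (x : ℝ) : IsSelfAdjoint (a ^ x) := .of_nonneg rpow_nonneg

lemma star_rpow (a : 𝔄) (x : ℝ) : star (a ^ x) = a ^ x := (isSelfAdjoint_rpow a x).star_eq

lemma rpow_neg_le_rpow_neg {p : ℝ} (hp : p ∈ Set.Icc (0 : ℝ) 1) (hab : a ≤ b)
    (ha : IsStrictlyPositive a) : b ^ (-p) ≤ a ^ (-p) := by
  rcases hp.1.eq_or_lt with rfl | hp0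
  · simp [rpow_zero a ha.nonneg, rpow_zero b (ha.nonneg.trans hab)]
  have hb := ha.of_le hab
  have := CStarAlgebra.rpow_neg_one_le_rpow_neg_one (rpow_le_rpow hp hab)
    (IsStrictlyPositive.rpow a p ha)
  rwa [rpow_rpow a _ _ hp0.ne' ha, rpow_rpow b _ _ hp0.ne' hb, mul_neg_one] at this

lemma rpow_unitary_conjugate {u : 𝔄} (hu : u ∈ unitary 𝔄) (ha : IsStrictlyPositive a) (x : ℝ) :
    (u * a * star u) ^ x = u * a ^ x * star u := by
  let φ : 𝔄 →⋆ₐ[ℂ] 𝔄 := Unitary.conjStarAlgAut ℂ 𝔄 ⟨u, hu⟩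
  have hφ : ∀ c, φ c = u * c * star u := fun _ => rfl
  have := φ.map_cfc (fun t : ℝ≥0 => t ^ x) a
    (NNReal.continuousOn_rpow_const (.inl (spectrum.zero_notMem ℝ≥0 ha.isUnit)))
    (by change Continuous fun c => u * c * star u; fun_prop)
  simpa only [hφ, ← rpow_def] using this.symm

/-- The unitary factor of the polar decomposition `m = (m * star m) ^ (1 / 2) * u`. -/
lemma rpow_neg_half_mul_mem_unitary {m : 𝔄} (hm : IsUnit m) :
    (m * star m) ^ (-(1 / 2) : ℝ) * m ∈ unitary 𝔄 := by
  have hx : IsStrictlyPositive (m * star m) :=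
    (hm.mul hm.star).isStrictlyPositive (mul_star_self_nonneg m)
  obtain ⟨u, hu_def⟩ : ∃ u, (m * star m) ^ (-(1 / 2) : ℝ) * m = u := ⟨_, rfl⟩
  have hu_star : u * star u = 1 := by
    rw [← hu_def, star_mul, star_rpow, ← conjugate_rpow_neg_one_half (m * star m)]
    simp only [mul_assoc]
  have hunit : IsUnit u := hu_def ▸ (IsStrictlyPositive.rpow _ _ hx).isUnit.mul hm
  have hinv : ↑hunit.unit⁻¹ = star u := Units.inv_eq_of_mul_eq_one_right hu_star
  rw [hu_def]
  refine Unitary.mem_iff.mpr ⟨?_, hu_star⟩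
  rw [← hinv, ← hunit.unit.inv_mul, hunit.unit_spec]

lemma rpow_mul_star_self {m : 𝔄} (hm : IsUnit m) (s : ℝ) :
    (m * star m) ^ s = m * (star m * m) ^ (s - 1) * star m := by
  have hu_mem := rpow_neg_half_mul_mem_unitary hm
  obtain ⟨x, hx_def⟩ : ∃ x, m * star m = x := ⟨_, rfl⟩
  have hx : IsStrictlyPositive x :=
    hx_def ▸ (hm.mul hm.star).isStrictlyPositive (mul_star_self_nonneg m)
  obtain ⟨u, hu_def⟩ : ∃ u, x ^ (-(1 / 2) : ℝ) * m = u := ⟨_, rfl⟩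
  rw [hx_def, hu_def] at hu_mem
  have hstar_u : star u = star m * x ^ (-(1 / 2) : ℝ) := by rw [← hu_def, star_mul, star_rpow]
  have hsm : star m * m = star u * x * u := by
    rw [hstar_u, ← hu_def]
    calc star m * m = star m * (x ^ (-(1 / 2) : ℝ) * x * x ^ (-(1 / 2) : ℝ)) * m := by
          rw [conjugate_rpow_neg_one_half x, mul_one]
      _ = _ := by simp only [mul_assoc]
  have hum : u * star m = x ^ (1 / 2 : ℝ) := by
    rw [← hu_def, mul_assoc, hx_def]
    nth_rewrite 2 [← rpow_one x]
    exact rpow_mul_rpow_of_add_eq hx.isUnit (by norm_num)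
  have hmu : m * star u = x ^ (1 / 2 : ℝ) := by
    rw [← star_rpow, ← hum, star_mul, star_star]
  have hconj := rpow_unitary_conjugate (Unitary.star_mem hu_mem) hx (s - 1)
  rw [star_star] at hconj
  rw [hx_def, hsm, hconj]
  calc x ^ s = x ^ (1 / 2 : ℝ) * x ^ (s - 1) * x ^ (1 / 2 : ℝ) :=
        (rpow_mul_rpow_mul_rpow_of_add_eq hx.isUnit (by ring)).symm
    _ = m * (star u * x ^ (s - 1) * u) * star m := by
        nth_rewrite 1 [← hmu]; rw [← hum]; simp only [mul_assoc]

/-- Furuta's inequality for the exponents `p = 2 + r`, `q = 2`. -/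
lemma rpow_half_conjugate_le_rpow (hb : IsStrictlyPositive b) (hba : b ≤ a) {r : ℝ}
    (hr : r ∈ Set.Icc (0 : ℝ) 1) :
    (a ^ (r / 2) * b ^ (2 + r) * a ^ (r / 2)) ^ (1 / 2 : ℝ) ≤ a ^ (1 + r) := by
  have ha := hb.of_le hba
  obtain ⟨m, hm_def⟩ : ∃ m, a ^ (r / 2) * b ^ (1 + r / 2) = m := ⟨_, rfl⟩
  have hm : IsUnit m :=
    hm_def ▸ (IsStrictlyPositive.rpow a _ ha).isUnit.mul (IsStrictlyPositive.rpow b _ hb).isUnit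
  have hstar_m : star m = b ^ (1 + r / 2) * a ^ (r / 2) := by
    rw [← hm_def, star_mul, star_rpow, star_rpow]
  have hm_star : m * star m = a ^ (r / 2) * b ^ (2 + r) * a ^ (r / 2) := by
    rw [hstar_m, ← hm_def, ← rpow_mul_rpow_of_add_eq hb.isUnit
      (show 1 + r / 2 + (1 + r / 2) = 2 + r by ring)]
    simp only [mul_assoc]
  have hstar_mm : star m * m = b ^ (1 + r / 2) * a ^ r * b ^ (1 + r / 2) := by
    rw [hstar_m, ← hm_def, ← rpow_mul_rpow_of_add_eq ha.isUnit (show r / 2 + r / 2 = r by ring)]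
    simp only [mul_assoc]
  have h_le_mm : b ^ (2 + 2 * r) ≤ star m * m :=
    calc b ^ (2 + 2 * r) = b ^ (1 + r / 2) * b ^ r * b ^ (1 + r / 2) :=
          (rpow_mul_rpow_mul_rpow_of_add_eq hb.isUnit (by ring)).symm
      _ ≤ star m * m := hstar_mm ▸
          IsSelfAdjoint.conjugate_le_conjugate (rpow_le_rpow hr hba) (isSelfAdjoint_rpow _ _)
  have h_inv_half : (star m * m) ^ (-(1 / 2) : ℝ) ≤ b ^ (-(1 + r)) := by
    have := rpow_neg_le_rpow_neg (p := 1 / 2) (by norm_num) h_le_mm (IsStrictlyPositive.rpow b _ hb)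
    rwa [rpow_rpow b _ _ (by linarith [hr.1]), show (2 + 2 * r) * -(1 / 2) = -(1 + r) by ring]
      at this
  calc (a ^ (r / 2) * b ^ (2 + r) * a ^ (r / 2)) ^ (1 / 2 : ℝ)
        = m * (star m * m) ^ (-(1 / 2) : ℝ) * star m := by
          rw [← hm_star, rpow_mul_star_self hm]; norm_num
    _ ≤ m * b ^ (-(1 + r)) * star m := star_right_conjugate_le_conjugate h_inv_half m
    _ = a ^ (r / 2) * b * a ^ (r / 2) := by
          rw [hstar_m, ← hm_def]
          nth_rewrite 4 [← rpow_one b]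
          rw [← rpow_mul_rpow_mul_rpow_of_add_eq hb.isUnit
            (show 1 + r / 2 + -(1 + r) + (1 + r / 2) = 1 by ring)]
          simp only [mul_assoc]
    _ ≤ a ^ (r / 2) * a * a ^ (r / 2) :=
          IsSelfAdjoint.conjugate_le_conjugate hba (isSelfAdjoint_rpow _ _)
    _ = a ^ (1 + r) := by
          nth_rewrite 2 [← rpow_one a]
          exact rpow_mul_rpow_mul_rpow_of_add_eq ha.isUnit (by ring)

end CFC

open CFC

section CStarAlgebra

variable {𝔄 : Type*} [CStarAlgebra 𝔄]

lemma norm_units_conjugate_le {u : 𝔄ˣ} {x : 𝔄} (h : IsSelfAdjoint (↑u * x * ↑u⁻¹)) :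
    ‖↑u * x * ↑u⁻¹‖ ≤ ‖x‖ := by
  nontriviality 𝔄
  have := spectrum.spectralRadius_le_nnnorm (𝕜 := ℂ) x
  rw [spectralRadius, ← spectrum.units_conjugate (u := u), ← spectralRadius,
    h.spectralRadius_eq_nnnorm, ENNReal.coe_le_coe] at this
  exact this

variable [PartialOrder 𝔄] [StarOrderedRing 𝔄] {a b : 𝔄}

lemma norm_le_one_of_star_mul_self_le_one {x : 𝔄} (h : star x * x ≤ 1) : ‖x‖ ≤ 1 := by
  have := (CStarAlgebra.norm_le_one_iff_of_nonneg _ (star_mul_self_nonneg x)).mpr h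
  rw [CStarRing.norm_star_mul_self] at this
  nlinarith [norm_nonneg x]

lemma le_one_of_rpow_mul_rpow_neg_one_mul_rpow_le {g : 𝔄} (ha : IsStrictlyPositive a)
    (hg : 0 ≤ g) {t : ℝ} (ht : 0 < t) (h : g ^ t * a ^ (-1 : ℝ) * g ^ t ≤ a ^ (-1 : ℝ)) :
    g ≤ 1 := by
  let u : 𝔄ˣ := (IsStrictlyPositive.rpow a (1 / 2) ha).isUnit.unit
  have hu : (u : 𝔄) = a ^ (1 / 2 : ℝ) := rfl
  have hu_inv : ↑u⁻¹ = a ^ (-(1 / 2) : ℝ) :=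
    Units.inv_eq_of_mul_eq_one_right (rpow_mul_rpow_neg _ ha)
  obtain ⟨x, hx_def⟩ : ∃ x, a ^ (-(1 / 2) : ℝ) * g ^ t * a ^ (1 / 2 : ℝ) = x := ⟨_, rfl⟩
  have hx : star x * x ≤ 1 :=
    calc star x * x = a ^ (1 / 2 : ℝ) * (g ^ t * a ^ (-1 : ℝ) * g ^ t) * a ^ (1 / 2 : ℝ) := by
          rw [← hx_def, star_mul, star_mul, star_rpow, star_rpow, star_rpow,
            ← rpow_mul_rpow_of_add_eq ha.isUnit (show -(1 / 2) + -(1 / 2) = (-1 : ℝ) by norm_num)]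
          simp only [mul_assoc]
      _ ≤ a ^ (1 / 2 : ℝ) * a ^ (-1 : ℝ) * a ^ (1 / 2 : ℝ) :=
          IsSelfAdjoint.conjugate_le_conjugate h (isSelfAdjoint_rpow _ _)
      _ = 1 := by
          rw [rpow_mul_rpow_mul_rpow_of_add_eq ha.isUnit (w := 0) (by norm_num),
            rpow_zero a ha.nonneg]
  have hgt : g ^ t = ↑u * x * ↑u⁻¹ := by
    rw [hu, hu_inv, ← hx_def]
    simp only [← mul_assoc, rpow_mul_rpow_neg _ ha, one_mul]
    rw [mul_assoc, rpow_mul_rpow_neg _ ha, mul_one]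
  have hgt_norm : ‖g‖ ^ t ≤ 1 := by
    rw [← norm_rpow g ht hg, hgt]
    exact (norm_units_conjugate_le (hgt ▸ isSelfAdjoint_rpow g t)).trans
      (norm_le_one_of_star_mul_self_le_one hx)
  refine (CStarAlgebra.norm_le_one_iff_of_nonneg g hg).mp ?_
  by_contra! hg1
  exact (Real.one_lt_rpow hg1 ht).not_ge hgt_norm

lemma mul_mul_le_self_of_le_rpow_neg_one {d : 𝔄} (ha : IsStrictlyPositive a)
    (hd : IsStrictlyPositive d) (h : d ≤ a ^ (-1 : ℝ)) : d * a * d ≤ d := by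
  have h_a_le : a ≤ d ^ (-1 : ℝ) := by
    have := rpow_neg_le_rpow_neg (p := 1) (by norm_num) h hd
    rwa [rpow_rpow a _ _ (by norm_num) ha, show (-1 : ℝ) * -1 = 1 by norm_num,
      rpow_one a ha.nonneg] at this
  calc d * a * d ≤ d * d ^ (-1 : ℝ) * d :=
        IsSelfAdjoint.conjugate_le_conjugate h_a_le hd.isSelfAdjoint
    _ = d := by
        nth_rewrite 1 [← rpow_one d hd.nonneg]; nth_rewrite 3 [← rpow_one d hd.nonneg]
        rw [rpow_mul_rpow_mul_rpow_of_add_eq hd.isUnit (w := 1) (by norm_num),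
          rpow_one d hd.nonneg]

lemma rpow_conjugate_rpow_le_of_mul_mul_le_self {d : 𝔄} (ha : IsStrictlyPositive a)
    (hd : IsStrictlyPositive d) (hdad : d * a * d ≤ d) {p : ℝ} (hp : p - 1 ∈ Set.Icc (0 : ℝ) 1) :
    a ^ (p * -(1 / 2)) * (a ^ (1 / 2 : ℝ) * d * d * a ^ (1 / 2 : ℝ)) ^ p * a ^ (p * -(1 / 2)) ≤
      a ^ (-((p - 1) / 2)) * d ^ (p + 1) * a ^ (-((p - 1) / 2)) := by
  obtain ⟨m, hm_def⟩ : ∃ m, a ^ (1 / 2 : ℝ) * d = m := ⟨_, rfl⟩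
  have hm : IsUnit m := hm_def ▸ (IsStrictlyPositive.rpow a _ ha).isUnit.mul hd.isUnit
  have hstar_m : star m = d * a ^ (1 / 2 : ℝ) := by
    rw [← hm_def, star_mul, star_rpow, hd.isSelfAdjoint.star_eq]
  have hm_star : a ^ (1 / 2 : ℝ) * d * d * a ^ (1 / 2 : ℝ) = m * star m := by
    rw [hstar_m, ← hm_def]; simp only [mul_assoc]
  have hstar_mm : star m * m = d * a * d := by
    rw [hstar_m, ← hm_def, show d * a ^ (1 / 2 : ℝ) * (a ^ (1 / 2 : ℝ) * d) =
      d * (a ^ (1 / 2 : ℝ) * a ^ (1 / 2 : ℝ)) * d by simp only [mul_assoc],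
      rpow_mul_rpow_of_add_eq ha.isUnit (z := 1) (by norm_num), rpow_one a ha.nonneg]
  obtain ⟨w, hw_def⟩ : ∃ w, a ^ (-((p - 1) / 2)) * d = w := ⟨_, rfl⟩
  have hw : a ^ (p * -(1 / 2)) * m = w := by
    rw [← hm_def, ← hw_def, ← mul_assoc,
      rpow_mul_rpow_of_add_eq ha.isUnit (z := -((p - 1) / 2)) (by ring)]
  have hstar_w : star m * a ^ (p * -(1 / 2)) = star w := by
    rw [← hw, star_mul, star_rpow]
  calc a ^ (p * -(1 / 2)) * (a ^ (1 / 2 : ℝ) * d * d * a ^ (1 / 2 : ℝ)) ^ p * a ^ (p * -(1 / 2))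
        = w * (d * a * d) ^ (p - 1) * star w := by
          rw [hm_star, rpow_mul_star_self hm, hstar_mm, ← hstar_w, ← hw]
          simp only [mul_assoc]
    _ ≤ w * d ^ (p - 1) * star w := star_right_conjugate_le_conjugate (rpow_le_rpow hp hdad) w
    _ = a ^ (-((p - 1) / 2)) * d ^ (p + 1) * a ^ (-((p - 1) / 2)) := by
          rw [← hw_def, star_mul, star_rpow, hd.isSelfAdjoint.star_eq]
          nth_rewrite 1 [← rpow_one d hd.nonneg]; nth_rewrite 3 [← rpow_one d hd.nonneg]
          rw [← rpow_mul_rpow_mul_rpow_of_add_eq hd.isUnit (show 1 + (p - 1) + 1 = p + 1 by ring)]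
          simp only [mul_assoc]

noncomputable def geomMean (a b : 𝔄) : 𝔄 :=
  a ^ (1 / 2 : ℝ) * (a ^ (-(1 / 2) : ℝ) * b * a ^ (-(1 / 2) : ℝ)) ^ (1 / 2 : ℝ) * a ^ (1 / 2 : ℝ)

lemma geomMean_nonneg (a b : 𝔄) : 0 ≤ geomMean a b :=
  conjugate_nonneg_of_nonneg rpow_nonneg rpow_nonneg

lemma geomMean_rpow_le_one_of_mem_Icc (ha : IsStrictlyPositive a) (hb : IsStrictlyPositive b)
    (h : geomMean a b ≤ 1) {p : ℝ} (hp : p ∈ Set.Icc (1 : ℝ) 2) :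
    geomMean (a ^ p) (b ^ p) ≤ 1 := by
  have hp0 : p ≠ 0 := by linarith [hp.1]
  have hε : p - 1 ∈ Set.Icc (0 : ℝ) 1 := ⟨by linarith [hp.1], by linarith [hp.2]⟩
  obtain ⟨c, hc_def⟩ : ∃ c, a ^ (-(1 / 2) : ℝ) * b * a ^ (-(1 / 2) : ℝ) = c := ⟨_, rfl⟩
  have hc : IsStrictlyPositive c := hc_def ▸ IsStrictlyPositive.conjugate_of_isUnit_of_isSelfAdjoint
    b _ (IsStrictlyPositive.rpow a _ ha).isUnit (isSelfAdjoint_rpow _ _) hb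
  obtain ⟨d, hd_def⟩ : ∃ d, c ^ (1 / 2 : ℝ) = d := ⟨_, rfl⟩
  have hd : IsStrictlyPositive d := hd_def ▸ IsStrictlyPositive.rpow c _ hc
  have h_d_le : d ≤ a ^ (-1 : ℝ) :=
    calc d = a ^ (-(1 / 2) : ℝ) * geomMean a b * a ^ (-(1 / 2) : ℝ) := by
          rw [geomMean, hc_def, hd_def, rpow_conjugate_rpow_cancel ha (by norm_num)]
      _ ≤ a ^ (-(1 / 2) : ℝ) * 1 * a ^ (-(1 / 2) : ℝ) :=
          IsSelfAdjoint.conjugate_le_conjugate h (isSelfAdjoint_rpow _ _)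
      _ = a ^ (-1 : ℝ) := by rw [mul_one, rpow_mul_rpow_of_add_eq ha.isUnit (z := -1) (by norm_num)]
  have hb_eq : b = a ^ (1 / 2 : ℝ) * d * d * a ^ (1 / 2 : ℝ) := by
    rw [mul_assoc (a ^ (1 / 2 : ℝ)) d d, ← hd_def,
      rpow_mul_rpow_of_add_eq hc.isUnit (z := 1) (by norm_num),
      rpow_one c hc.nonneg, ← hc_def, rpow_conjugate_rpow_cancel ha (by norm_num)]
  have h_conj := rpow_conjugate_rpow_le_of_mul_mul_le_self ha hd
    (mul_mul_le_self_of_le_rpow_neg_one ha hd h_d_le) hε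
  have h_furuta := rpow_half_conjugate_le_rpow hd h_d_le hε
  rw [rpow_rpow a (-1) _ (by norm_num) ha, rpow_rpow a (-1) _ (by norm_num) ha,
    show (-1 : ℝ) * ((p - 1) / 2) = -((p - 1) / 2) by ring, show 2 + (p - 1) = p + 1 by ring,
    show (-1 : ℝ) * (1 + (p - 1)) = -p by ring] at h_furuta
  calc geomMean (a ^ p) (b ^ p)
        = a ^ (p * (1 / 2)) * (a ^ (p * -(1 / 2)) * b ^ p * a ^ (p * -(1 / 2))) ^ (1 / 2 : ℝ) *
            a ^ (p * (1 / 2)) := by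
          rw [geomMean, rpow_rpow a p _ hp0 ha, rpow_rpow a p _ hp0 ha]
    _ ≤ a ^ (p * (1 / 2)) * a ^ (-p) * a ^ (p * (1 / 2)) :=
          IsSelfAdjoint.conjugate_le_conjugate
            ((rpow_le_rpow (by norm_num) (hb_eq ▸ h_conj)).trans h_furuta) (isSelfAdjoint_rpow _ _)
    _ = 1 := by
          rw [rpow_mul_rpow_mul_rpow_of_add_eq ha.isUnit (w := 0) (by ring), rpow_zero a ha.nonneg]

/-- The Ando–Hiai inequality. -/
theorem geomMean_rpow_le_one (ha : IsStrictlyPositive a) (hb : IsStrictlyPositive b)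
    (h : geomMean a b ≤ 1) {p : ℝ} (hp : 1 ≤ p) : geomMean (a ^ p) (b ^ p) ≤ 1 := by
  obtain ⟨k, hk⟩ := pow_unbounded_of_one_lt p one_lt_two
  induction k generalizing p with
  | zero => exact absurd hp (by simpa using hk)
  | succ k ih =>
    rcases le_or_gt p 2 with hp2 | hp2
    · exact geomMean_rpow_le_one_of_mem_Icc ha hb h ⟨hp, hp2⟩
    have hhalf := ih (p := p / 2) (by linarith) (by rw [pow_succ] at hk; linarith)
    have := geomMean_rpow_le_one_of_mem_Icc (IsStrictlyPositive.rpow a _ ha)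
      (IsStrictlyPositive.rpow b _ hb) hhalf (p := 2) ⟨one_le_two, le_rfl⟩
    rwa [rpow_rpow a _ _ (by positivity) ha, rpow_rpow b _ _ (by positivity) hb,
      div_mul_cancel₀ p two_ne_zero] at this

end CStarAlgebra

lemma mpow_eq_rpow {A : Matrix n n ℂ} (hA : 0 ≤ A) (t : ℝ) : mpow A t = A ^ t :=
  (rpow_eq_cfc_real hA).symm

lemma geo_eq_geomMean {A B : Matrix n n ℂ} (hA : 0 ≤ A) (hB : 0 ≤ B) : geo A B = geomMean A B := by
  rw [geo, mpow_eq_rpow hA, mpow_eq_rpow hA,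
    mpow_eq_rpow (conjugate_nonneg_of_nonneg hB rpow_nonneg), geomMean]

/-- if `A⁻¹ ♮ₜ B ≤ A⁻¹` for some `t ∈ (0,1]`, then
`A^p # B^p ≤ I` for all `p ≥ 1`. -/
theorem stmt16 (A B : Matrix n n ℂ) (hA : A.PosDef) (hB : B.PosDef)
    {t : ℝ} (ht : t ∈ Set.Ioc (0:ℝ) 1) (h : Loewner (sgeo t A⁻¹ B) A⁻¹) :
    ∀ p : ℝ, 1 ≤ p → Loewner (geo (mpow A p) (mpow B p)) 1 := by
  intro p hp
  have hA' := hA.isStrictlyPositive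
  have hB' := hB.isStrictlyPositive
  have hA_inv : A⁻¹ = A ^ (-1 : ℝ) := by
    rw [Matrix.nonsing_inv_eq_ringInverse, inverse_eq_rpow_neg_one]
  have hg : geomMean A B ≤ 1 := by
    refine le_one_of_rpow_mul_rpow_neg_one_mul_rpow_le hA' (geomMean_nonneg A B) ht.1 ?_
    have h' : sgeo t A⁻¹ B ≤ A⁻¹ := h
    rwa [sgeo, Matrix.nonsing_inv_nonsing_inv A ((Matrix.isUnit_iff_isUnit_det A).mp hA.isUnit),
      geo_eq_geomMean hA'.nonneg hB'.nonneg, mpow_eq_rpow (geomMean_nonneg A B), hA_inv] at h'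
  have hAp : (0 : Matrix n n ℂ) ≤ A ^ p := rpow_nonneg
  have hBp : (0 : Matrix n n ℂ) ≤ B ^ p := rpow_nonneg
  show geo (mpow A p) (mpow B p) ≤ 1
  rw [mpow_eq_rpow hA'.nonneg, mpow_eq_rpow hB'.nonneg, geo_eq_geomMean hAp hBp]
  exact geomMean_rpow_le_one hA' hB' hg hp
end
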